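/- Let $g : \mathbb{R} \to [0,\infty)$, $f : \mathbb{R} \to (0,\infty)$, and reals $X_1,\dots,X_n$. Suppose $\sup_x |\widehat{f}(x) - f(x)| \le \delta$ and let $e > 0$, $\widehat{f}_e = \max(\widehat{f}, e)$. Then $\left| \frac{1}{n}\sum_{i=1}^n g(X_i)\Big(\frac{1}{\widehat{f}_e(X_i)} - \frac{1}{f(X_i)}\Big) \right| \le \Big(\frac{1}{n}\sum_{i=1}^n \frac{g(X_i)}{f(X_i)^2}\Big) e + \Big(\frac{1}{n}\sum_{i=1}^n g(X_i)\Big) \frac{\delta}{e^2}$. -/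

import Mathlib

/-!
Split `1 / max (fhat x) e - 1 / f x` through `1 / max (f x) e`. Trimming at level `e` makes
`t ↦ 1 / max t e` Lipschitz with constant `1 / e ^ 2`, which gives the `δ / e ^ 2` term; trimming
the true density costs nothing where `e ≤ f x` and at most `1 / f x ≤ e / f x ^ 2` where `f x < e`.
Averaging these pointwise bounds with the nonnegative weights `g (X i)` gives the estimate.
-/

open Finset

theorem abs_one_div_max_sub_one_div_max_le {e : ℝ} (he : 0 < e) (a b : ℝ) :
    |1 / max a e - 1 / max b e| ≤ |a - b| / e ^ 2 := by
  have ha : 0 < max a e := he.trans_le (le_max_right a e)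
  have hb : 0 < max b e := he.trans_le (le_max_right b e)
  rw [div_sub_div _ _ ha.ne' hb.ne', one_mul, mul_one, abs_div, abs_of_pos (mul_pos ha hb),
    abs_sub_comm]
  have hden : e ^ 2 ≤ max a e * max b e := by
    rw [sq]; exact mul_le_mul (le_max_right a e) (le_max_right b e) he.le ha.le
  exact div_le_div₀ (abs_nonneg _) (abs_max_sub_max_le_abs a b e) (by positivity) hden

theorem abs_one_div_max_sub_one_div_le {c e : ℝ} (hc : 0 < c) (he : 0 ≤ e) :
    |1 / max c e - 1 / c| ≤ e / c ^ 2 := by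
  rcases le_or_gt e c with hec | hce
  · rw [max_eq_left hec, sub_self, abs_zero]
    positivity
  · have he' : 0 < e := hc.trans hce
    rw [max_eq_right hce.le, abs_sub_comm,
      abs_of_nonneg (sub_nonneg.mpr (one_div_le_one_div_of_le hc hce.le))]
    calc 1 / c - 1 / e ≤ 1 / c := sub_le_self _ (by positivity)
      _ = c / c ^ 2 := by field_simp
      _ ≤ e / c ^ 2 := by gcongr

theorem abs_one_div_max_sub_one_div_le_add {a c e : ℝ} (hc : 0 < c) (he : 0 < e) :
    |1 / max a e - 1 / c| ≤ e / c ^ 2 + |a - c| / e ^ 2 :=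
  calc |1 / max a e - 1 / c|
      ≤ |1 / max a e - 1 / max c e| + |1 / max c e - 1 / c| := abs_sub_le _ _ _
    _ ≤ |a - c| / e ^ 2 + e / c ^ 2 :=
        add_le_add (abs_one_div_max_sub_one_div_max_le he a c)
          (abs_one_div_max_sub_one_div_le hc he.le)
    _ = e / c ^ 2 + |a - c| / e ^ 2 := add_comm _ _

theorem abs_mul_sum_mul_le {ι : Type*} (s : Finset ι) {c p q : ℝ} {w d a : ι → ℝ}
    (hc : 0 ≤ c) (hw : ∀ i ∈ s, 0 ≤ w i) (hd : ∀ i ∈ s, |d i| ≤ a i * p + q) :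
    |c * ∑ i ∈ s, w i * d i| ≤ (c * ∑ i ∈ s, w i * a i) * p + (c * ∑ i ∈ s, w i) * q := by
  have hsum : |∑ i ∈ s, w i * d i| ≤ ∑ i ∈ s, w i * (a i * p + q) :=
    (abs_sum_le_sum_abs _ _).trans <| sum_le_sum fun i hi => by
      rw [abs_mul, abs_of_nonneg (hw i hi)]
      exact mul_le_mul_of_nonneg_left (hd i hi) (hw i hi)
  calc |c * ∑ i ∈ s, w i * d i| = c * |∑ i ∈ s, w i * d i| := by rw [abs_mul, abs_of_nonneg hc]
    _ ≤ c * ∑ i ∈ s, w i * (a i * p + q) := mul_le_mul_of_nonneg_left hsum hc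
    _ = (c * ∑ i ∈ s, w i * a i) * p + (c * ∑ i ∈ s, w i) * q := by
        simp only [mul_add, sum_add_distrib, ← mul_assoc, ← sum_mul]

/-- Deterministic core estimate (the `A + B` bound) in the proof of Proposition 1. -/
theorem wr_core_estimate (n : ℕ) (g f fhat : ℝ → ℝ) (X : Fin n → ℝ)
    (hg : ∀ x, 0 ≤ g x) (hf : ∀ x, 0 < f x)
    (δ : ℝ) (hδ : ∀ x, |fhat x - f x| ≤ δ)
    (e : ℝ) (he : 0 < e) :
    |(1 / n : ℝ) * ∑ i, g (X i) * (1 / max (fhat (X i)) e - 1 / f (X i))| ≤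
      ((1 / n : ℝ) * ∑ i, g (X i) / (f (X i)) ^ 2) * e
        + ((1 / n : ℝ) * ∑ i, g (X i)) * (δ / e ^ 2) := by
  have hpoint : ∀ x, |1 / max (fhat x) e - 1 / f x| ≤ 1 / f x ^ 2 * e + δ / e ^ 2 := fun x =>
    calc |1 / max (fhat x) e - 1 / f x| ≤ e / f x ^ 2 + |fhat x - f x| / e ^ 2 :=
          abs_one_div_max_sub_one_div_le_add (hf x) he
      _ ≤ 1 / f x ^ 2 * e + δ / e ^ 2 := by
          rw [one_div_mul_eq_div]; gcongr; exact hδ x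
  simpa only [mul_one_div] using
    abs_mul_sum_mul_le univ (by positivity) (fun i _ => hg (X i)) (fun i _ => hpoint (X i))
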